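/- The number of permutations of [n] with k weak exceedances, ℓ crossings, and m nestings equals the number of permutations of [n] with k weak exceedances, m crossings, and ℓ nestings. -/

import Mathlib

open Finset

/-- Number of weak exceedances of a permutation. -/
def wexc (n : ℕ) (σ : Equiv.Perm (Fin n)) : ℕ :=
  (univ.filter fun i : Fin n => i ≤ σ i).card

/-- Number of crossings of a permutation (pairs p = (i,j)). -/
def crossings (n : ℕ) (σ : Equiv.Perm (Fin n)) : ℕ :=
  (univ.filter fun p : Fin n × Fin n =>
      p.2 < p.1 ∧ p.1 ≤ σ p.2 ∧ σ p.2 < σ p.1).card +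
    (univ.filter fun p : Fin n × Fin n =>
      p.1 < p.2 ∧ σ p.2 < p.1 ∧ σ p.1 < σ p.2).card

/-- Number of nestings of a permutation (pairs p = (i,j)). -/
def nestings (n : ℕ) (σ : Equiv.Perm (Fin n)) : ℕ :=
  (univ.filter fun p : Fin n × Fin n =>
      p.2 < p.1 ∧ p.1 ≤ σ p.1 ∧ σ p.1 < σ p.2).card +
    (univ.filter fun p : Fin n × Fin n =>
      p.1 < p.2 ∧ σ p.1 < p.1 ∧ σ p.2 < σ p.1).card

/-!
A crossing or a nesting is formed by two upper arcs `i ↦ σ i` (`i ≤ σ i`) or by two lower arcs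
(`σ i < i`); charge it to one of them, `k`. Then `nestAt σ k + crossAt σ k = openAt σ k`, the
number of arcs of the kind of `k` still open where `k` starts, and `openAt` depends only on the
shape of `σ`: which positions and which values carry upper arcs. For a fixed shape,
`σ ↦ nestAt σ` is a bijection onto the box `∏ k, [0, openAt σ k]`. It is injective because
`nestAt σ k` is the rank of `σ k` among the values open at `k`, which recovers `σ` arc by arc,
and surjective because swapping `σ k` with the next open value below or above it changes
`nestAt` at `k` alone, by one. So `nestAt ↦ openAt - nestAt = crossAt` lifts to an involution
of the permutations that keeps the shape, hence the weak exceedances, and exchanges crossings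
with nestings.
-/

open OrderDual Function Equiv

section SwapCount

variable {β : Type*} [DecidableEq β]

theorem swap_apply_iff_of_iff {Q : β → Prop} {p i : β} (h : Q p ↔ Q i) (j : β) :
    Q (swap p i j) ↔ Q j := by
  rcases eq_or_ne j p with rfl | hjp
  · rw [swap_apply_left, h]
  rcases eq_or_ne j i with rfl | hji
  · rw [swap_apply_right, h]
  · rw [swap_apply_of_ne_of_ne hjp hji]

theorem card_filter_swap_apply [Fintype β] {S P : β → Prop} [DecidablePred S] [DecidablePred P]
    {p i : β} (h : (S p ↔ S i) ∨ (P p ↔ P i)) :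
    #{j | S j ∧ P (swap p i j)} = #{j | S j ∧ P j} := by
  rcases h with h | h
  · refine card_equiv (swap p i) fun j => ?_
    simp only [mem_filter, mem_univ, true_and, swap_apply_iff_of_iff h]
  · refine congrArg card (filter_congr fun j _ => ?_)
    rw [swap_apply_iff_of_iff h]

end SwapCount

theorem eq_of_card_filter_lt_eq {β : Type*} [LinearOrder β] {s : Finset β} {x y : β}
    (hx : x ∈ s) (hy : y ∈ s) (h : #{v ∈ s | x < v} = #{v ∈ s | y < v}) : x = y := by
  by_contra hne
  wlog hxy : x < y generalizing x y
  · exact this hy hx h.symm (Ne.symm hne) ((Ne.symm hne).lt_of_le (not_lt.1 hxy))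
  refine (card_lt_card ?_).ne' h
  refine (ssubset_iff_of_subset fun v hv => ?_).2 ⟨y, ?_, ?_⟩
  · simp only [mem_filter] at hv ⊢
    exact ⟨hv.1, hxy.trans hv.2⟩
  · simp [hy, hxy]
  · simp

theorem lt_iff_lt_of_not_between {β : Type*} [LinearOrder β] {a b x : β} (hab : a < b)
    (hxa : x ≠ a) (h : ¬(a < x ∧ x < b)) : x < a ↔ x < b :=
  ⟨fun hx => hx.trans hab,
    fun hx => (lt_or_gt_of_ne hxa).resolve_right fun h' => h ⟨h', hx⟩⟩

theorem lt_iff_lt_of_not_between' {β : Type*} [LinearOrder β] {a b x : β} (hab : a < b)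
    (hxb : x ≠ b) (h : ¬(a < x ∧ x < b)) : a < x ↔ b < x :=
  ⟨fun hx => (lt_or_gt_of_ne hxb).resolve_left fun h' => h ⟨hx, h'⟩, hab.trans⟩

theorem card_filter_prod_eq_sum {β γ : Type*} [Fintype β] [Fintype γ] (P : β × γ → Prop)
    [DecidablePred P] : #{x | P x} = ∑ b, #{c | P (b, c)} := by
  simp only [card_filter, Fintype.sum_prod_type]

theorem card_filter_toDual {α : Type*} [Fintype α] (P : αᵒᵈ → Prop) [DecidablePred P] :
    #{j | P j} = #{j : α | P (toDual j)} :=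
  card_equiv ofDual fun j => by simp

section UpperRel

variable {α : Type*} [LinearOrder α]

def IsUpperRel (O : α → α → Prop) : Prop :=
  ∀ ⦃i j v w⦄, j ≤ i → v ≤ w → O i v → O j w

theorem isUpperRel_le : IsUpperRel (α := α) (· ≤ ·) :=
  fun _ _ _ _ hji hvw h => hji.trans (h.trans hvw)

def dualRel (O : α → α → Prop) (i v : αᵒᵈ) : Prop := ¬O (ofDual i) (ofDual v)

instance {O : α → α → Prop} [DecidableRel O] : DecidableRel (dualRel O) :=
  fun _ _ => instDecidableNot

theorem IsUpperRel.dual {O : α → α → Prop} (hO : IsUpperRel O) : IsUpperRel (dualRel O) :=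
  fun _ _ _ _ hji hvw h h' => h (hO hji hvw h')

end UpperRel

section ArcStatistics

variable {α : Type*} [LinearOrder α] [Fintype α]

/- The arcs `k ↦ σ k` with `O k (σ k)` play the role of the upper arcs. The theorem concerns
`O = (· ≤ ·)`; reversing the order turns its lower arcs into the upper arcs of `dualRel O`
(see `nestAt_dual`), so that each argument below is only carried out for upper arcs. -/
variable (O : α → α → Prop) [DecidableRel O]

def nestAt (σ : Perm α) (k : α) : ℕ :=
  if O k (σ k) then #{j | j < k ∧ σ k < σ j} else #{j | k < j ∧ σ j < σ k}

def crossAt (σ : Perm α) (k : α) : ℕ :=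
  if O k (σ k) then #{j | j < k ∧ O k (σ j) ∧ σ j < σ k}
  else #{j | k < j ∧ ¬O k (σ j) ∧ σ k < σ j}

def openAt (σ : Perm α) (k : α) : ℕ :=
  if O k (σ k) then #{j | j < k ∧ O k (σ j)} else #{j | k < j ∧ ¬O k (σ j)}

structure SameShape (σ τ : Perm α) : Prop where
  up_iff : ∀ k, O k (σ k) ↔ O k (τ k)
  up_symm_iff : ∀ v, O (σ.symm v) v ↔ O (τ.symm v) v
  openAt_eq : openAt O σ = openAt O τ

def openValues (σ : Perm α) (k : α) : Finset α :=
  {v | O k v ∧ σ.symm v ≤ k}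

variable {O}

namespace SameShape

theorem refl (σ : Perm α) : SameShape O σ σ := ⟨fun _ => .rfl, fun _ => .rfl, rfl⟩

theorem symm {σ τ : Perm α} (h : SameShape O σ τ) : SameShape O τ σ :=
  ⟨fun k => (h.up_iff k).symm, fun v => (h.up_symm_iff v).symm, h.openAt_eq.symm⟩

theorem trans {σ τ ρ : Perm α} (h : SameShape O σ τ) (h' : SameShape O τ ρ) :
    SameShape O σ ρ :=
  ⟨fun k => (h.up_iff k).trans (h'.up_iff k), fun v => (h.up_symm_iff v).trans (h'.up_symm_iff v),
    h.openAt_eq.trans h'.openAt_eq⟩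

end SameShape

theorem nestAt_add_crossAt (hO : IsUpperRel O) (σ : Perm α) (k : α) :
    nestAt O σ k + crossAt O σ k = openAt O σ k := by
  have hne : ∀ {j}, j ≠ k → σ j ≠ σ k := fun h e => h (σ.injective e)
  unfold nestAt crossAt openAt
  split_ifs with hk
  · rw [← card_filter_add_card_filter_not (s := {j | j < k ∧ O k (σ j)})
      (fun j => σ k < σ j)]
    congr 2 <;> ext j <;> simp only [mem_filter, mem_univ, true_and, not_lt]
    · exact ⟨fun h => ⟨⟨h.1, hO le_rfl h.2.le hk⟩, h.2⟩, fun h => ⟨h.1.1, h.2⟩⟩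
    · exact ⟨fun h => ⟨⟨h.1, h.2.1⟩, h.2.2.le⟩,
        fun h => ⟨h.1.1, h.1.2, h.2.lt_of_ne (hne h.1.1.ne)⟩⟩
  · rw [← card_filter_add_card_filter_not (s := {j | k < j ∧ ¬O k (σ j)})
      (fun j => σ j < σ k)]
    congr 2 <;> ext j <;> simp only [mem_filter, mem_univ, true_and, not_lt]
    · exact ⟨fun h => ⟨⟨h.1, fun h' => hk (hO le_rfl h.2.le h')⟩, h.2⟩,
        fun h => ⟨h.1.1, h.2⟩⟩
    · exact ⟨fun h => ⟨⟨h.1, h.2.1⟩, h.2.2.le⟩,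
        fun h => ⟨h.1.1, h.1.2, h.2.lt_of_ne (hne h.1.1.ne').symm⟩⟩

theorem SameShape.crossAt_eq_nestAt (hO : IsUpperRel O) {σ τ : Perm α} (h : SameShape O σ τ)
    (hn : nestAt O τ = crossAt O σ) : crossAt O τ = nestAt O σ := by
  funext k
  have hσ := nestAt_add_crossAt hO σ k
  have hτ := nestAt_add_crossAt hO τ k
  rw [← h.openAt_eq, congrFun hn k] at hτ
  omega

section Swap

variable {p i : α} {σ : Perm α}

theorem sameShape_mul_swap (hO : IsUpperRel O) (hpi : p ≤ i) (hp : O i (σ p)) (hi : O i (σ i)) :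
    SameShape O σ (σ * swap p i) := by
  have hboth : ∀ {k}, k ≤ i → (O k (σ p) ↔ O k (σ i)) := fun hk =>
    iff_of_true (hO hk le_rfl hp) (hO hk le_rfl hi)
  have hup : ∀ k, O k (σ k) ↔ O k ((σ * swap p i) k) := fun k => by
    rcases le_or_gt k i with hki | hik
    · exact (swap_apply_iff_of_iff (Q := fun j => O k (σ j)) (hboth hki) k).symm
    · rw [Perm.mul_apply, swap_apply_of_ne_of_ne (hpi.trans_lt hik).ne' hik.ne']
  refine ⟨hup, fun v => ?_, funext fun k => ?_⟩
  · obtain ⟨u, rfl⟩ := σ.surjective v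
    have hsymm : (σ * swap p i).symm (σ u) = swap p i u := by
      rw [Equiv.symm_apply_eq, Perm.mul_apply, swap_apply_self]
    rw [hsymm, σ.symm_apply_apply]
    by_cases hu : u = p ∨ u = i
    · have hσu : O i (σ u) := by rcases hu with rfl | rfl <;> assumption
      exact (swap_apply_iff_of_iff (Q := fun j => O j (σ u))
        (iff_of_true (hO hpi le_rfl hσu) hσu) u).symm
    · push Not at hu
      rw [swap_apply_of_ne_of_ne hu.1 hu.2]
  · unfold openAt
    split_ifs with h₁ h₂ h₂
    · refine (card_filter_swap_apply (P := fun j => O k (σ j)) ?_).symm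
      rcases le_or_gt k i with hki | hik
      · exact .inr (hboth hki)
      · exact .inl (iff_of_true (hpi.trans_lt hik) hik)
    · exact absurd ((hup k).1 h₁) h₂
    · exact absurd ((hup k).2 h₂) h₁
    · refine (card_filter_swap_apply (P := fun j => ¬O k (σ j)) ?_).symm
      rcases le_or_gt k i with hki | hik
      · exact .inr (not_congr (hboth hki))
      · exact .inl (iff_of_false (hpi.trans hik.le).not_gt hik.not_gt)

theorem nestAt_mul_swap_self (hO : IsUpperRel O) (hpi : p < i) (hp : O i (σ p))
    (hlt : σ p < σ i) (hadj : ∀ j < i, ¬(σ p < σ j ∧ σ j < σ i)) :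
    nestAt O (σ * swap p i) i = nestAt O σ i + 1 := by
  have hset : ({j | j < i ∧ (σ * swap p i) i < (σ * swap p i) j} : Finset α) =
      insert p ({j | j < i ∧ σ i < σ j} : Finset α) := by
    ext j
    simp only [mem_insert, mem_filter, mem_univ, true_and, Perm.mul_apply, swap_apply_right]
    rcases eq_or_ne j p with rfl | hjp
    · simp [hpi, hlt]
    · rw [or_iff_right hjp]
      refine and_congr_right fun hj => ?_
      rw [swap_apply_of_ne_of_ne hjp hj.ne,
        lt_iff_lt_of_not_between' hlt (σ.injective.ne hj.ne) (hadj j hj)]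
  unfold nestAt
  rw [if_pos (by simpa using hp), if_pos (hO le_rfl hlt.le hp), hset,
    card_insert_of_notMem (by simp [hlt.le])]

theorem nestAt_mul_swap_of_ne (hO : IsUpperRel O) (hpi : p < i) (hp : O i (σ p))
    (hlt : σ p < σ i) (hadj : ∀ j < i, ¬(σ p < σ j ∧ σ j < σ i)) {k : α}
    (hki : k ≠ i) :
    nestAt O (σ * swap p i) k = nestAt O σ k := by
  have hi : O i (σ i) := hO le_rfl hlt.le hp
  rcases eq_or_ne k p with rfl | hkp
  · have hτk : (σ * swap k i) k = σ i := by rw [Perm.mul_apply, swap_apply_left]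
    unfold nestAt
    rw [hτk, if_pos (hO hpi.le le_rfl hi), if_pos (hO hpi.le le_rfl hp)]
    refine congrArg card (filter_congr fun j _ => and_congr_right fun hj => ?_)
    have hji := hj.trans hpi
    rw [Perm.mul_apply, swap_apply_of_ne_of_ne hj.ne hji.ne,
      lt_iff_lt_of_not_between' hlt (σ.injective.ne hji.ne) (hadj j hji)]
  have hτk : (σ * swap p i) k = σ k := by
    rw [Perm.mul_apply, swap_apply_of_ne_of_ne hkp hki]
  unfold nestAt
  rw [hτk]
  split_ifs with hk
  · refine card_filter_swap_apply (P := fun j => σ k < σ j) ?_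
    rcases lt_or_gt_of_ne hki with hki | hik
    · exact .inr (lt_iff_lt_of_not_between hlt (σ.injective.ne hkp) (hadj k hki))
    · exact .inl (iff_of_true (hpi.trans hik) hik)
  · refine card_filter_swap_apply (P := fun j => σ j < σ k) ?_
    rcases lt_or_gt_of_ne hki with hki | hik
    · have hσk : ∀ {v}, O k v → σ k < v := fun hv =>
        lt_of_not_ge fun h => hk (hO le_rfl h hv)
      exact .inr (iff_of_false (hσk (hO hki.le le_rfl hp)).not_gt
        (hσk (hO hki.le le_rfl hi)).not_gt)
    · exact .inl (iff_of_false (hpi.trans hik).not_gt hik.not_gt)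

theorem nestAt_mul_swap (hO : IsUpperRel O) (hpi : p < i) (hp : O i (σ p)) (hlt : σ p < σ i)
    (hadj : ∀ j < i, ¬(σ p < σ j ∧ σ j < σ i)) :
    nestAt O (σ * swap p i) = update (nestAt O σ) i (nestAt O σ i + 1) :=
  eq_update_iff.2 ⟨nestAt_mul_swap_self hO hpi hp hlt hadj,
    fun _ hki => nestAt_mul_swap_of_ne hO hpi hp hlt hadj hki⟩

end Swap

theorem nestAt_dual (σ : Perm α) (k : α) :
    nestAt (dualRel O) (toDual.permCongr σ) (toDual k) = nestAt O σ k := by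
  by_cases hk : O k (σ k) <;> simp [nestAt, dualRel, hk, card_filter_toDual]

theorem openAt_dual (σ : Perm α) (k : α) :
    openAt (dualRel O) (toDual.permCongr σ) (toDual k) = openAt O σ k := by
  unfold openAt
  rw [card_filter_toDual, card_filter_toDual]
  by_cases hk : O k (σ k) <;> simp [dualRel, hk]

section Moves

variable {σ : Perm α} {i : α}

theorem sameShape_dual_iff {τ : Perm α} :
    SameShape (dualRel O) (toDual.permCongr σ) (toDual.permCongr τ) ↔ SameShape O σ τ := by
  constructor
  · rintro ⟨h₁, h₂, h₃⟩
    exact ⟨fun k => not_iff_not.1 (h₁ (toDual k)), fun v => not_iff_not.1 (h₂ (toDual v)),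
      funext fun k => by simpa [openAt_dual] using congrFun h₃ (toDual k)⟩
  · rintro ⟨h₁, h₂, h₃⟩
    refine ⟨fun k => not_congr (h₁ (ofDual k)), fun v => not_congr (h₂ (ofDual v)),
      funext fun k => ?_⟩
    obtain ⟨k, rfl⟩ := toDual.surjective k
    rw [openAt_dual, openAt_dual, h₃]

theorem exists_sameShape_nestAt_succ_of_up (hO : IsUpperRel O) (hi : O i (σ i))
    (hlt : nestAt O σ i < openAt O σ i) :
    ∃ τ, SameShape O σ τ ∧ nestAt O τ = update (nestAt O σ) i (nestAt O σ i + 1) := by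
  have hcross : 0 < crossAt O σ i := by have := nestAt_add_crossAt hO σ i; omega
  rw [crossAt, if_pos hi, card_pos] at hcross
  obtain ⟨p, hp, hmax⟩ := exists_max_image _ σ hcross
  simp only [mem_filter, mem_univ, true_and] at hp hmax
  refine ⟨σ * swap p i, sameShape_mul_swap hO hp.1.le hp.2.1 hi,
    nestAt_mul_swap hO hp.1 hp.2.1 hp.2.2 fun j hj h => ?_⟩
  exact (hmax j ⟨hj, hO le_rfl h.1.le hp.2.1, h.2⟩).not_gt h.1

theorem exists_sameShape_nestAt_pred_of_up (hO : IsUpperRel O) (hi : O i (σ i))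
    (hpos : 0 < nestAt O σ i) :
    ∃ τ, SameShape O σ τ ∧ nestAt O τ = update (nestAt O σ) i (nestAt O σ i - 1) := by
  rw [nestAt, if_pos hi, card_pos] at hpos
  -- `σ` is the increment of `σ * swap p i` at `i`, for the next open value `σ p` above `σ i`.
  obtain ⟨p, hp, hmin⟩ := exists_min_image _ σ hpos
  simp only [mem_filter, mem_univ, true_and] at hp hmin
  have hτp : (σ * swap p i) p = σ i := by rw [Perm.mul_apply, swap_apply_left]
  have hτi : (σ * swap p i) i = σ p := by rw [Perm.mul_apply, swap_apply_right]
  have hshape := sameShape_mul_swap hO hp.1.le (hτp ▸ hi) (hτi ▸ hO le_rfl hp.2.le hi)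
  have hnest := nestAt_mul_swap hO hp.1 (hτp ▸ hi) (hτp ▸ hτi ▸ hp.2) fun j hj h => by
    rcases eq_or_ne j p with rfl | hjp
    · exact h.1.false
    simp only [Perm.mul_apply, swap_apply_left, swap_apply_right,
      swap_apply_of_ne_of_ne hjp hj.ne] at h
    exact (hmin j ⟨hj, h.1⟩).not_gt h.2
  rw [mul_swap_mul_self] at hshape hnest
  refine ⟨σ * swap p i, hshape.symm, ?_⟩
  rw [hnest, update_idem, update_self, Nat.add_sub_cancel, update_eq_self]

theorem exists_sameShape_nestAt_update_of_up (hO : IsUpperRel O) (hi : O i (σ i)) {c : ℕ}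
    (hc : c ≤ openAt O σ i) (hstep : c = nestAt O σ i + 1 ∨ c + 1 = nestAt O σ i) :
    ∃ τ, SameShape O σ τ ∧ nestAt O τ = update (nestAt O σ) i c := by
  rcases hstep with rfl | hc'
  · exact exists_sameShape_nestAt_succ_of_up hO hi hc
  · rw [show c = nestAt O σ i - 1 by omega]
    exact exists_sameShape_nestAt_pred_of_up hO hi (by omega)

theorem exists_sameShape_nestAt_update (hO : IsUpperRel O) {c : ℕ} (hc : c ≤ openAt O σ i)
    (hstep : c = nestAt O σ i + 1 ∨ c + 1 = nestAt O σ i) :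
    ∃ τ, SameShape O σ τ ∧ nestAt O τ = update (nestAt O σ) i c := by
  by_cases hi : O i (σ i)
  · exact exists_sameShape_nestAt_update_of_up hO hi hc hstep
  obtain ⟨τ', hshape, hnest⟩ := exists_sameShape_nestAt_update_of_up hO.dual
    (σ := toDual.permCongr σ) (i := toDual i) (c := c) hi (by rwa [openAt_dual])
    (by rwa [nestAt_dual])
  obtain ⟨τ, rfl⟩ := (permCongr toDual).surjective τ'
  refine ⟨τ, sameShape_dual_iff.1 hshape, funext fun k => ?_⟩
  simpa [nestAt_dual, update_apply] using congrFun hnest (toDual k)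

end Moves

theorem exists_sameShape_nestAt_eq (hO : IsUpperRel O) (σ : Perm α) (a : α → ℕ)
    (ha : a ≤ openAt O σ) : ∃ τ, SameShape O σ τ ∧ nestAt O τ = a := by
  by_cases h : nestAt O σ = a
  · exact ⟨σ, .refl σ, h⟩
  obtain ⟨i, hi⟩ := Function.ne_iff.1 h
  obtain ⟨c, hc, hstep, hcloser⟩ : ∃ c ≤ openAt O σ i,
      (c = nestAt O σ i + 1 ∨ c + 1 = nestAt O σ i) ∧
      Nat.dist c (a i) < Nat.dist (nestAt O σ i) (a i) := by
    have hle : a i ≤ openAt O σ i := ha i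
    have hsum := nestAt_add_crossAt hO σ i
    unfold Nat.dist
    rcases lt_or_gt_of_ne hi with h | h
    · exact ⟨nestAt O σ i + 1, by omega, .inl rfl, by omega⟩
    · exact ⟨nestAt O σ i - 1, by omega, .inr (by omega), by omega⟩
  obtain ⟨σ', hσσ', hσ'⟩ := exists_sameShape_nestAt_update hO hc hstep
  have hdist : ∑ k, Nat.dist (nestAt O σ' k) (a k) < ∑ k, Nat.dist (nestAt O σ k) (a k) := by
    refine sum_lt_sum (fun k _ => ?_) ⟨i, mem_univ i, ?_⟩
    · rw [hσ', update_apply]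
      split_ifs with hk
      · exact hk ▸ hcloser.le
      · exact le_rfl
    · rwa [hσ', update_self]
  obtain ⟨τ, hσ'τ, hτ⟩ := exists_sameShape_nestAt_eq hO σ' a (hσσ'.openAt_eq ▸ ha)
  exact ⟨τ, hσσ'.trans hσ'τ, hτ⟩
termination_by ∑ k, Nat.dist (nestAt O σ k) (a k)

theorem nestAt_eq_card_openValues (hO : IsUpperRel O) {σ : Perm α} {k : α} (hk : O k (σ k)) :
    nestAt O σ k = #{v ∈ openValues O σ k | σ k < v} := by
  rw [nestAt, if_pos hk]
  refine card_equiv σ fun j => ?_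
  simp only [openValues, mem_filter, mem_univ, true_and, σ.symm_apply_apply]
  refine ⟨fun h => ⟨⟨hO le_rfl h.2.le hk, h.1.le⟩, h.2⟩,
    fun h => ⟨h.1.2.lt_of_ne ?_, h.2⟩⟩
  rintro rfl
  exact h.2.false

theorem SameShape.openValues_subset (hO : IsUpperRel O) {σ τ : Perm α} (h : SameShape O σ τ)
    {k : α} (hagree : ∀ j > k, O j (σ j) → σ j = τ j) :
    openValues O σ k ⊆ openValues O τ k := by
  intro v hv
  simp only [openValues, mem_filter, mem_univ, true_and] at hv ⊢
  refine ⟨hv.1, not_lt.1 fun hlt => ?_⟩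
  by_cases hj : O (τ.symm v) v
  · have hσ : σ (τ.symm v) = v := by
      rw [hagree _ hlt ((h.up_iff _).2 (by rwa [τ.apply_symm_apply])), τ.apply_symm_apply]
    rw [← hσ, σ.symm_apply_apply] at hv
    exact hv.2.not_gt hlt
  · exact hj ((h.up_symm_iff v).1 (hO hv.2 le_rfl hv.1))

theorem SameShape.apply_eq_of_up (hO : IsUpperRel O) {σ τ : Perm α} (h : SameShape O σ τ)
    (hn : nestAt O σ = nestAt O τ) (k : α) : O k (σ k) → σ k = τ k := by
  induction k using WellFoundedGT.induction with
  | _ k ih =>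
  intro hk
  have hτk : O k (τ k) := (h.up_iff k).1 hk
  have hX : openValues O σ k = openValues O τ k :=
    (h.openValues_subset hO ih).antisymm (h.symm.openValues_subset hO fun j hj hτj =>
      (ih j hj ((h.up_iff j).2 hτj)).symm)
  refine eq_of_card_filter_lt_eq (s := openValues O σ k) ?_ ?_ ?_
  · simp [openValues, hk]
  · rw [hX]
    simp [openValues, hτk]
  · rw [← nestAt_eq_card_openValues hO hk, hX, ← nestAt_eq_card_openValues hO hτk, hn]

theorem SameShape.eq_of_nestAt_eq (hO : IsUpperRel O) {σ τ : Perm α} (h : SameShape O σ τ)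
    (hn : nestAt O σ = nestAt O τ) : σ = τ := by
  ext k
  by_cases hk : O k (σ k)
  · exact h.apply_eq_of_up hO hn k hk
  have hn' : nestAt (dualRel O) (toDual.permCongr σ) =
      nestAt (dualRel O) (toDual.permCongr τ) := by
    funext k
    obtain ⟨k, rfl⟩ := toDual.surjective k
    rw [nestAt_dual, nestAt_dual, hn]
  exact toDual.injective ((sameShape_dual_iff.2 h).apply_eq_of_up hO.dual hn' (toDual k) hk)

theorem exists_involutive_nestAt_eq_crossAt (hO : IsUpperRel O) :
    ∃ ι : Perm α → Perm α, Involutive ι ∧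
      ∀ σ, SameShape O σ (ι σ) ∧ nestAt O (ι σ) = crossAt O σ := by
  have hle : ∀ σ, crossAt O σ ≤ openAt O σ := fun σ k =>
    nestAt_add_crossAt hO σ k ▸ Nat.le_add_left _ _
  choose ι hshape hnest using fun σ => exists_sameShape_nestAt_eq hO σ (crossAt O σ) (hle σ)
  refine ⟨ι, fun σ => ?_, fun σ => ⟨hshape σ, hnest σ⟩⟩
  refine ((hshape σ).trans (hshape (ι σ))).symm.eq_of_nestAt_eq hO ?_
  rw [hnest, (hshape σ).crossAt_eq_nestAt hO (hnest σ)]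

end ArcStatistics

section Permutations

variable {n : ℕ}

theorem nestings_eq_sum_nestAt (σ : Perm (Fin n)) :
    nestings n σ = ∑ k, nestAt (· ≤ ·) σ k := by
  rw [nestings, card_filter_prod_eq_sum, card_filter_prod_eq_sum, ← sum_add_distrib]
  refine sum_congr rfl fun k _ => ?_
  by_cases hk : k ≤ σ k
  · simp [nestAt, hk, not_lt.2 hk]
  · simp [nestAt, hk, not_le.1 hk]

theorem crossings_eq_sum_crossAt (σ : Perm (Fin n)) :
    crossings n σ = ∑ k, crossAt (· ≤ ·) σ k := by
  rw [crossings, card_filter_prod_eq_sum, card_filter_prod_eq_sum, ← sum_add_distrib]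
  refine sum_congr rfl fun k _ => ?_
  by_cases hk : k ≤ σ k
  · simpa [crossAt, hk] using fun j _ (hj : σ j < k) => (hj.trans_le hk).le
  · simpa [crossAt, hk] using fun j _ (hj : k ≤ σ j) => ((not_le.1 hk).trans_le hj).le

theorem SameShape.wexc_eq {σ τ : Perm (Fin n)} (h : SameShape (· ≤ ·) σ τ) :
    wexc n σ = wexc n τ :=
  congrArg card (filter_congr fun k _ => h.up_iff k)

end Permutations

/-- The number of permutations of [n] with k weak exceedances, ℓ crossings and
m nestings equals the number with k weak exceedances, m crossings and ℓ nestings. -/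
theorem stmt9 (n k ℓ m : ℕ) :
    ((univ : Finset (Equiv.Perm (Fin n))).filter fun σ =>
        wexc n σ = k ∧ crossings n σ = ℓ ∧ nestings n σ = m).card =
    ((univ : Finset (Equiv.Perm (Fin n))).filter fun σ =>
        wexc n σ = k ∧ crossings n σ = m ∧ nestings n σ = ℓ).card := by
  obtain ⟨ι, hι, hισ⟩ := exists_involutive_nestAt_eq_crossAt (isUpperRel_le (α := Fin n))
  have hstats : ∀ σ, wexc n (ι σ) = wexc n σ ∧ crossings n (ι σ) = nestings n σ ∧
      nestings n (ι σ) = crossings n σ := fun σ => by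
    obtain ⟨hshape, hnest⟩ := hισ σ
    rw [crossings_eq_sum_crossAt, nestings_eq_sum_nestAt, nestings_eq_sum_nestAt,
      crossings_eq_sum_crossAt, hnest, hshape.crossAt_eq_nestAt isUpperRel_le hnest]
    exact ⟨hshape.wexc_eq.symm, rfl, rfl⟩
  refine card_nbij' ι ι (fun σ hσ => ?_) (fun σ hσ => ?_) (fun σ _ => hι σ)
    (fun σ _ => hι σ) <;>
    simp only [coe_filter, mem_univ, true_and, Set.mem_ofPred_eq, hstats] at hσ ⊢ <;>
    exact ⟨hσ.1, hσ.2.2, hσ.2.1⟩
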